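/- arXiv:0903.1352 — 3 statements merged into one kernel-verified Lean document; each statement's English description precedes it below -/
import Mathlib

section
/- For threads P_1,…,P_n arising as the solution of a finite linear recursive specification with n equations, if π(n−1, P_i) = π(n−1, P_j) then π(k, P_i) = π(k, P_j) for all k ∈ ℕ, hence P_i = P_j. In particular, equality of regular threads given by finite linear recursive specifications is decidable. -/
/-- Basic Thread Algebra: freely generated by `S`, `D` and postconditional
composition `pcc P a Q` (i.e. `P ⊴ a ⊵ Q`). -/
inductive BTA (A : Type) : Type
  | S : BTA A
  | D : BTA A
  | pcc : BTA A → A → BTA A → BTA A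

namespace BTA

variable {A : Type}

/-- The approximation operator `π`. -/
def pi : ℕ → BTA A → BTA A
  | 0, _ => D
  | _+1, S => S
  | _+1, D => D
  | n+1, pcc P a Q => pcc (pi n P) a (pi n Q)

end BTA
theorem BTA.pi_pi {A : Type} : ∀ (n : ℕ) (P : BTA A),
    BTA.pi n (BTA.pi (n+1) P) = BTA.pi n P := by
  intro n
  induction n with
  | zero => intro P; rfl
  | succ n ih => intro P; cases P <;> simp [BTA.pi, ih]

/-- `BTA^∞`: the completion of BTA, given by projective sequences. -/
def BTAinf (A : Type) : Type := {f : ℕ → BTA A // ∀ n, BTA.pi n (f (n+1)) = f n}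

/-- The thread `S` in `BTA^∞`. -/
def Sinf (A : Type) : BTAinf A :=
  ⟨fun n => match n with | 0 => BTA.D | _+1 => BTA.S, by intro n; cases n <;> rfl⟩

/-- The thread `D` in `BTA^∞`. -/
def Dinf (A : Type) : BTAinf A := ⟨fun _ => BTA.D, by intro n; cases n <;> rfl⟩

/-- Postconditional composition `x ⊴ a ⊵ y` on `BTA^∞`. -/
def pccInf {A : Type} (a : A) (x y : BTAinf A) : BTAinf A :=
  ⟨fun n => match n with
    | 0 => BTA.D
    | n+1 => BTA.pcc (x.1 n) a (y.1 n),
   by intro n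
      cases n with
      | zero => rfl
      | succ n =>
          show BTA.pi (n+1) (BTA.pcc (x.1 (n+1)) a (y.1 (n+1))) = _
          simp [BTA.pi, x.2 n, y.2 n]⟩

/-- The right-hand sides of a finite linear recursive specification with
index set `Fin n`: each is `S`, `D`, or `x_j ⊴ a ⊵ x_k`. -/
inductive LinTerm (A : Type) (n : ℕ) : Type
  | S : LinTerm A n
  | D : LinTerm A n
  | pcc (j : Fin n) (a : A) (k : Fin n) : LinTerm A n

/-- `P` is a solution of the finite linear recursive specification `t`. -/
def IsSolution {A : Type} {n : ℕ} (t : Fin n → LinTerm A n)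
    (P : Fin n → BTAinf A) : Prop :=
  ∀ i : Fin n,
    match t i with
    | LinTerm.S => P i = Sinf A
    | LinTerm.D => P i = Dinf A
    | LinTerm.pcc j a k => P i = pccInf a (P j) (P k)

/-!
The level-`m` approximations of `P₁, …, Pₙ` partition the indices, and these partitions refine as
`m` grows. While a level still splits some class the number of classes grows, and there are at most
`n` of them, so some level `m < n` splits nothing. Splitting never resumes: by the equations, the
level-`(m+2)` approximation of `Pᵢ` is computed from `tᵢ` and the level-`(m+1)` approximations in
the same way as level `m+1` is computed from level `m`. Hence from level `n - 1` on, agreement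
propagates upwards, and it propagates downwards by projectivity.
-/

theorem Nat.exists_lt_eq_succ_of_monotone {c : ℕ → ℕ} {N : ℕ} (hc : Monotone c)
    (h0 : 1 ≤ c 0) (hN : c N ≤ N) : ∃ m < N, c m = c (m + 1) := by
  by_contra! hne
  have grow : ∀ m ≤ N, m + 1 ≤ c m := by
    intro m
    induction m with
    | zero => exact fun _ => h0
    | succ m ih =>
      intro hm
      have := lt_of_le_of_ne (hc (Nat.le_add_right m 1)) (hne m hm)
      have := ih (by omega)
      omega
  have := grow N le_rfl
  omega

namespace BTAinf

variable {A : Type}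

theorem ext {x y : BTAinf A} (h : ∀ k, x.1 k = y.1 k) : x = y :=
  Subtype.ext (funext h)

theorem approx_eq_of_succ {x y : BTAinf A} {m : ℕ} (h : x.1 (m + 1) = y.1 (m + 1)) :
    x.1 m = y.1 m := by
  rw [← x.2 m, ← y.2 m, h]

theorem approx_eq_of_le {x y : BTAinf A} {a b : ℕ} (hab : a ≤ b) (h : x.1 b = y.1 b) :
    x.1 a = y.1 a := by
  induction b, hab using Nat.le_induction with
  | base => exact h
  | succ b _ ih => exact ih (approx_eq_of_succ h)

end BTAinf

section Approximations

variable {A ι : Type}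

/-- The partition of `ι` by level-`(m+1)` approximations is no finer than by level `m`. -/
def ApproxStableAt (x : ι → BTAinf A) (m : ℕ) : Prop :=
  ∀ i j, (x i).1 m = (x j).1 m → (x i).1 (m + 1) = (x j).1 (m + 1)

theorem approx_eq_of_forall_approxStableAt {x : ι → BTAinf A} {m : ℕ}
    (hs : ∀ l, m ≤ l → ApproxStableAt x l) {i j : ι} (h : (x i).1 m = (x j).1 m) (k : ℕ) :
    (x i).1 k = (x j).1 k := by
  rcases le_total k m with hk | hk
  · exact BTAinf.approx_eq_of_le hk h
  · induction k, hk using Nat.le_induction with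
    | base => exact h
    | succ l hl ih => exact hs l hl i j ih

open scoped Classical in
noncomputable def approxCount [Fintype ι] (x : ι → BTAinf A) (m : ℕ) : ℕ :=
  (Finset.univ.image fun i => (x i).1 m).card

variable [Fintype ι] (x : ι → BTAinf A)

open scoped Classical in
theorem image_approx_eq_image_pi_image_approx_succ (m : ℕ) :
    (Finset.univ.image fun i => (x i).1 m) =
      (Finset.univ.image fun i => (x i).1 (m + 1)).image (BTA.pi m) := by
  rw [Finset.image_image]
  exact Finset.image_congr fun i _ => ((x i).2 m).symm

theorem approxCount_mono : Monotone (approxCount x) := by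
  classical
  refine monotone_nat_of_le_succ fun m => ?_
  unfold approxCount
  rw [image_approx_eq_image_pi_image_approx_succ]
  exact Finset.card_image_le

theorem approxStableAt_of_approxCount_eq {m : ℕ} (h : approxCount x m = approxCount x (m + 1)) :
    ApproxStableAt x m := by
  classical
  unfold approxCount at h
  rw [image_approx_eq_image_pi_image_approx_succ] at h
  have hinj := Finset.injOn_of_card_image_eq h
  intro i j hij
  refine hinj (Finset.mem_image_of_mem _ (Finset.mem_univ i))
    (Finset.mem_image_of_mem _ (Finset.mem_univ j)) ?_
  rwa [(x i).2 m, (x j).2 m]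

theorem approxCount_le_card (m : ℕ) : approxCount x m ≤ Fintype.card ι := by
  classical
  exact Finset.card_le_univ _ |>.trans' Finset.card_image_le

theorem one_le_approxCount [Nonempty ι] (m : ℕ) : 1 ≤ approxCount x m := by
  classical
  exact Finset.card_pos.mpr (Finset.univ_nonempty.image _)

theorem exists_approxStableAt_lt_card [Nonempty ι] :
    ∃ m < Fintype.card ι, ApproxStableAt x m := by
  obtain ⟨m, hm, heq⟩ := Nat.exists_lt_eq_succ_of_monotone (approxCount_mono x)
    (one_le_approxCount x 0) (approxCount_le_card x _)
  exact ⟨m, hm, approxStableAt_of_approxCount_eq x heq⟩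

end Approximations

namespace LinTerm

variable {A : Type} {n : ℕ}

def unfold : LinTerm A n → (Fin n → BTA A) → BTA A
  | S, _ => BTA.S
  | D, _ => BTA.D
  | pcc j a k, f => BTA.pcc (f j) a (f k)

theorem unfold_eq_unfold_of_factors {f g : Fin n → BTA A} (hfg : ∀ a b, f a = f b → g a = g b)
    {s s' : LinTerm A n} (h : s.unfold f = s'.unfold f) : s.unfold g = s'.unfold g := by
  cases s <;> cases s' <;> simp only [unfold, reduceCtorEq, BTA.pcc.injEq] at h ⊢
  obtain ⟨hj, ha, hk⟩ := h
  exact ⟨hfg _ _ hj, ha, hfg _ _ hk⟩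

end LinTerm

namespace IsSolution

variable {A : Type} {n : ℕ} {t : Fin n → LinTerm A n} {P : Fin n → BTAinf A}

theorem approx_succ (hP : IsSolution t P) (i : Fin n) (m : ℕ) :
    (P i).1 (m + 1) = (t i).unfold fun j => (P j).1 m := by
  have hi := hP i
  cases ht : t i <;> rw [ht] at hi <;> rw [hi] <;> rfl

theorem approxStableAt_succ (hP : IsSolution t P) {m : ℕ} (hs : ApproxStableAt P m) :
    ApproxStableAt P (m + 1) := by
  intro i j h
  rw [hP.approx_succ i, hP.approx_succ j] at h ⊢
  exact LinTerm.unfold_eq_unfold_of_factors hs h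

theorem approxStableAt_of_le (hP : IsSolution t P) {m : ℕ} (hs : ApproxStableAt P m) {l : ℕ}
    (hml : m ≤ l) : ApproxStableAt P l := by
  induction l, hml using Nat.le_induction with
  | base => exact hs
  | succ l _ ih => exact hP.approxStableAt_succ ih

end IsSolution

theorem eq_of_approx_eq_general {A : Type} {n : ℕ}
    (t : Fin n → LinTerm A n) (P : Fin n → BTAinf A)
    (hP : IsSolution t P) (i j : Fin n)
    (h : (P i).1 (n-1) = (P j).1 (n-1)) :
    (∀ k : ℕ, (P i).1 k = (P j).1 k) ∧ P i = P j := by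
  have : Nonempty (Fin n) := ⟨i⟩
  obtain ⟨m, hm, hs⟩ := exists_approxStableAt_lt_card P
  rw [Fintype.card_fin] at hm
  have hall := approx_eq_of_forall_approxStableAt
    (fun l hl => hP.approxStableAt_of_le hs (by omega : m ≤ l)) h
  exact ⟨hall, BTAinf.ext hall⟩

/-- For the solution `P_1,…,P_n` of a finite linear recursive specification
with `n` equations: if `π(n-1, P_i) = π(n-1, P_j)` then `π(k, P_i) = π(k, P_j)`
for all `k`, hence `P_i = P_j` (equality in `BTA^∞` being componentwise). -/
theorem eq_of_approx_eq {A : Type} {n : ℕ} (hn : 1 ≤ n)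
    (t : Fin n → LinTerm A n) (P : Fin n → BTAinf A)
    (hP : IsSolution t P) (i j : Fin n)
    (h : (P i).1 (n-1) = (P j).1 (n-1)) :
    (∀ k : ℕ, (P i).1 k = (P j).1 k) ∧ P i = P j :=
  eq_of_approx_eq_general t P hP i j h
end

section
/- Every regular thread is produced by a C-program, i.e., for every solution P_1 of a finite linear recursive specification there is a C-program X with left-to-right thread extraction ⌊X⌋_1 = P_1; moreover X can be chosen using only instructions from {+/a, /#k, #k\, !, #}. -/
/-- The instructions of the semigroup `C`: forward and backward basic,
positive test, negative test and jump instructions, termination `!`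
and abort `#`. -/
inductive Instr (A : Type) : Type
  | fbasic (a : A)      -- /a
  | fptest (a : A)      -- +/a
  | fntest (a : A)      -- -/a
  | fjump (k : ℕ+)      -- /#k
  | bbasic (a : A)      -- a\
  | bptest (a : A)      -- +a\
  | bntest (a : A)      -- -a\
  | bjump (k : ℕ+)      -- #k\
  | halt                -- !
  | abort               -- #

/-- The instruction at (1-based) position `j` of the `C`-expression `X`. -/
def instAt {A : Type} (X : List (Instr A)) (j : ℤ) : Option (Instr A) :=
  if 1 ≤ j ∧ j ≤ (X.length : ℤ) then X[(j-1).toNat]? else none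

/-- `T` satisfies the thread-extraction equations for the `C`-expression `X`
(Table 1 of the paper, together with `⌊X⌋_j = D` for out-of-range `j`). -/
def ExtrEqns {A : Type} (X : List (Instr A)) (T : ℤ → BTAinf A) : Prop :=
  ∀ j : ℤ,
    match instAt X j with
    | none => T j = Dinf A
    | some (Instr.fbasic a) => T j = pccInf a (T (j+1)) (T (j+1))
    | some (Instr.fptest a) => T j = pccInf a (T (j+1)) (T (j+2))
    | some (Instr.fntest a) => T j = pccInf a (T (j+2)) (T (j+1))
    | some (Instr.fjump k) => T j = T (j + ((k : ℕ) : ℤ))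
    | some (Instr.bbasic a) => T j = pccInf a (T (j-1)) (T (j-1))
    | some (Instr.bptest a) => T j = pccInf a (T (j-1)) (T (j-2))
    | some (Instr.bntest a) => T j = pccInf a (T (j-2)) (T (j-1))
    | some (Instr.bjump k) => T j = T (j - ((k : ℕ) : ℤ))
    | some Instr.halt => T j = Sinf A
    | some Instr.abort => T j = Dinf A

/-- Position `j` holds a jump instruction of `X` whose target is `j'`. -/
def JumpsTo {A : Type} (X : List (Instr A)) (j j' : ℤ) : Prop :=
  (∃ k : ℕ+, instAt X j = some (Instr.fjump k) ∧ j' = j + ((k : ℕ) : ℤ)) ∨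
  (∃ k : ℕ+, instAt X j = some (Instr.bjump k) ∧ j' = j - ((k : ℕ) : ℤ))

/-- From position `j` the equations yield a loop of consecutive jumps
without any actions. -/
def InJumpLoop {A : Type} (X : List (Instr A)) (j : ℤ) : Prop :=
  ∃ f : ℕ → ℤ, f 0 = j ∧ ∀ n, JumpsTo X (f n) (f (n+1))

/-- The rule that a loop of jumps without any actions extracts to `D`. -/
def LoopRule {A : Type} (X : List (Instr A)) (T : ℤ → BTAinf A) : Prop :=
  ∀ j : ℤ, InJumpLoop X j → T j = Dinf A

/-- One step of control from position `j` to position `j'` in `X`. -/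
def Succ {A : Type} (X : List (Instr A)) (j j' : ℤ) : Prop :=
  match instAt X j with
  | some (Instr.fbasic _) => j' = j + 1
  | some (Instr.fptest _) => j' = j + 1 ∨ j' = j + 2
  | some (Instr.fntest _) => j' = j + 1 ∨ j' = j + 2
  | some (Instr.fjump k) => j' = j + ((k : ℕ) : ℤ)
  | some (Instr.bbasic _) => j' = j - 1
  | some (Instr.bptest _) => j' = j - 1 ∨ j' = j - 2
  | some (Instr.bntest _) => j' = j - 1 ∨ j' = j - 2
  | some (Instr.bjump k) => j' = j - ((k : ℕ) : ℤ)
  | _ => False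

/-- A `C`-program: a nonempty instruction sequence in which control,
started anywhere inside the sequence, never reaches a position outside it. -/
def CProgram {A : Type} (X : List (Instr A)) : Prop :=
  X ≠ [] ∧
  ∀ j j' : ℤ, 1 ≤ j → j ≤ (X.length : ℤ) →
    Relation.ReflTransGen (Succ X) j j' → 1 ≤ j' ∧ j' ≤ (X.length : ℤ)

/-- Membership in the instruction set `{+/a, /#k, #k\, !, #}`. -/
def InReducedSet {A : Type} (ins : Instr A) : Prop :=
  match ins with
  | Instr.fptest _ => True
  | Instr.fjump _ => True
  | Instr.bjump _ => True
  | Instr.halt => True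
  | Instr.abort => True
  | _ => False

/-! Equation `i` of the specification is compiled to a block of three instructions at
positions `3i + 1, 3i + 2, 3i + 3`: `x_i = x_j ⊴ a ⊵ x_k` becomes `+/a` followed by a jump to
block `j` and a jump to block `k`, while `S` and `D` become `!;#;#` and `#;#;#`. Attaching `P i`
to the first instruction of block `i`, and to its two jumps the threads `P j` and `P k` of their
targets, solves the extraction equations, because every jump lands on the first instruction of a
block. That instruction is never a jump, so there are no jump loops, and every successor of a
position is again a position of some block, so the sequence is a C-program. Relabelling the
specification so that `i` becomes the first equation puts `P i` at position 1. -/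

def LinTerm.rename {A : Type} {n m : ℕ} (f : Fin n → Fin m) : LinTerm A n → LinTerm A m
  | S => S
  | D => D
  | pcc j a k => pcc (f j) a (f k)

theorem IsSolution.relabel {A : Type} {n m : ℕ} {t : Fin n → LinTerm A n}
    {P : Fin n → BTAinf A} (hP : IsSolution t P) (e : Fin m ≃ Fin n) :
    IsSolution (fun x => (t (e x)).rename e.symm) (P ∘ e) := by
  intro x
  have hx := hP (e x)
  cases h : t (e x) <;> simp only [h] at hx <;>
    simpa only [h, LinTerm.rename, Function.comp_apply, Equiv.apply_symm_apply] using hx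

namespace Instr

variable {A : Type}

def jump (d : ℤ) : Instr A :=
  if 0 < d then fjump d.toNat.toPNat'
  else if d < 0 then bjump (-d).toNat.toPNat'
  else abort

@[simp]
theorem jump_eq_fjump_iff {d : ℤ} {k : ℕ+} :
    (jump d : Instr A) = fjump k ↔ ((k : ℕ) : ℤ) = d := by
  have := k.pos
  unfold jump
  split_ifs <;> simp only [fjump.injEq, false_iff, ← PNat.coe_inj, Nat.toPNat'_coe] <;>
    grind

@[simp]
theorem jump_eq_bjump_iff {d : ℤ} {k : ℕ+} :
    (jump d : Instr A) = bjump k ↔ ((k : ℕ) : ℤ) = -d := by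
  have := k.pos
  unfold jump
  split_ifs <;> simp only [bjump.injEq, false_iff, ← PNat.coe_inj, Nat.toPNat'_coe] <;>
    grind

theorem jump_cases {d : ℤ} (hd : d ≠ 0) :
    (∃ k : ℕ+, (jump d : Instr A) = fjump k ∧ ((k : ℕ) : ℤ) = d) ∨
      ∃ k : ℕ+, (jump d : Instr A) = bjump k ∧ ((k : ℕ) : ℤ) = -d := by
  rcases hd.lt_or_gt with hd | hd
  · have hk : (((-d).toNat.toPNat' : ℕ) : ℤ) = -d := by simp [hd, hd.le]
    exact .inr ⟨_, jump_eq_bjump_iff.2 hk, hk⟩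
  · have hk : ((d.toNat.toPNat' : ℕ) : ℤ) = d := by simp [hd, hd.le]
    exact .inl ⟨_, jump_eq_fjump_iff.2 hk, hk⟩

theorem inReducedSet_jump (d : ℤ) : InReducedSet (jump d : Instr A) := by
  unfold jump
  split_ifs <;> trivial

end Instr

theorem fin_three_cases (r : Fin 3) : r = 0 ∨ r = 1 ∨ r = 2 := by
  fin_cases r <;> simp

section Compile

variable {A : Type} {n : ℕ}

def blockPos (i : Fin n) (r : Fin 3) : ℤ := 3 * (i : ℕ) + (r : ℕ) + 1

theorem exists_blockPos_eq {m : ℤ} (h : 1 ≤ m ∧ m ≤ 3 * n) :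
    ∃ (i : Fin n) (r : Fin 3), blockPos i r = m :=
  ⟨⟨(m - 1).toNat / 3, by omega⟩, ⟨(m - 1).toNat % 3, by omega⟩, by
    simp only [blockPos]; omega⟩

theorem blockPos_mem_range (i : Fin n) (r : Fin 3) :
    1 ≤ blockPos i r ∧ blockPos i r ≤ 3 * n := by
  simp only [blockPos]; omega

theorem toNat_blockPos_sub_one_lt (i : Fin n) (r : Fin 3) : (blockPos i r - 1).toNat < n * 3 := by
  simp only [blockPos]; omega

theorem divNat_modNat_blockPos (i : Fin n) (r : Fin 3) :
    (⟨_, toNat_blockPos_sub_one_lt i r⟩ : Fin (n * 3)).divNat = i ∧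
      (⟨_, toNat_blockPos_sub_one_lt i r⟩ : Fin (n * 3)).modNat = r := by
  constructor <;> ext <;> simp only [Fin.coe_divNat, Fin.coe_modNat, blockPos] <;> omega

theorem blockPos_zero_add_one (i : Fin n) : blockPos i 0 + 1 = blockPos i 1 := by
  simp only [blockPos, Fin.val_zero, Fin.val_one]; push_cast; ring

theorem blockPos_zero_add_two (i : Fin n) : blockPos i 0 + 2 = blockPos i 2 := by
  simp only [blockPos, Fin.val_zero, Fin.val_two]; push_cast; ring

theorem blockPos_one_add (i j : Fin n) :
    blockPos i 1 + (3 * ((j : ℕ) - (i : ℕ) : ℤ) - 1) = blockPos j 0 := by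
  simp only [blockPos, Fin.val_zero, Fin.val_one]; push_cast; ring

theorem blockPos_two_add (i k : Fin n) :
    blockPos i 2 + (3 * ((k : ℕ) - (i : ℕ) : ℤ) - 2) = blockPos k 0 := by
  simp only [blockPos, Fin.val_zero, Fin.val_two]; push_cast; ring

-- The two offsets are `≡ 2` and `≡ 1 (mod 3)`, so never the junk case `jump 0`.
def LinTerm.block (i : ℕ) : LinTerm A n → Fin 3 → Instr A
  | S => ![.halt, .abort, .abort]
  | D => ![.abort, .abort, .abort]
  | pcc j a k =>
    ![.fptest a, .jump (3 * ((j : ℕ) - i : ℤ) - 1), .jump (3 * ((k : ℕ) - i : ℤ) - 2)]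

def compile (t : Fin n → LinTerm A n) : List (Instr A) :=
  List.ofFn fun q : Fin (n * 3) => (t q.divNat).block q.divNat q.modNat

theorem length_compile (t : Fin n → LinTerm A n) : (compile t).length = n * 3 :=
  List.length_ofFn

theorem instAt_compile_blockPos (t : Fin n → LinTerm A n) (i : Fin n) (r : Fin 3) :
    instAt (compile t) (blockPos i r) = some ((t i).block i r) := by
  have := blockPos_mem_range i r
  rw [instAt, if_pos (by rw [length_compile]; push_cast; omega), compile, List.getElem?_ofFn,
    dif_pos (toNat_blockPos_sub_one_lt i r), (divNat_modNat_blockPos i r).1,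
    (divNat_modNat_blockPos i r).2]

theorem instAt_compile_eq_none (t : Fin n → LinTerm A n) {m : ℤ}
    (h : ¬(1 ≤ m ∧ m ≤ 3 * n)) :
    instAt (compile t) m = none := by
  rw [instAt, if_neg (by rw [length_compile]; push_cast; omega)]

theorem inReducedSet_of_mem_compile {t : Fin n → LinTerm A n} {c : Instr A}
    (hc : c ∈ compile t) : InReducedSet c := by
  obtain ⟨q, rfl⟩ := List.mem_ofFn.mp hc
  cases t q.divNat <;> rcases fin_three_cases q.modNat with h | h | h <;>
    simp only [LinTerm.block, h, Matrix.cons_val_zero, Matrix.cons_val_one, Matrix.cons_val_two,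
      Matrix.tail_cons, Matrix.head_cons, Instr.inReducedSet_jump] <;> trivial

def LinTerm.blockThread (P : Fin n → BTAinf A) (i : Fin n) : LinTerm A n → Fin 3 → BTAinf A
  | pcc j _ k => ![P i, P j, P k]
  | _ => ![P i, Dinf A, Dinf A]

@[simp]
theorem LinTerm.blockThread_zero (P : Fin n → BTAinf A) (i : Fin n) (u : LinTerm A n) :
    u.blockThread P i 0 = P i := by
  cases u <;> rfl

def compiledThread (t : Fin n → LinTerm A n) (P : Fin n → BTAinf A) (m : ℤ) : BTAinf A :=
  if h : 1 ≤ m ∧ m ≤ 3 * n then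
    let q : Fin (n * 3) := ⟨(m - 1).toNat, by omega⟩
    (t q.divNat).blockThread P q.divNat q.modNat
  else Dinf A

theorem compiledThread_blockPos (t : Fin n → LinTerm A n) (P : Fin n → BTAinf A) (i : Fin n)
    (r : Fin 3) : compiledThread t P (blockPos i r) = (t i).blockThread P i r := by
  rw [compiledThread, dif_pos (blockPos_mem_range i r)]
  dsimp only
  rw [(divNat_modNat_blockPos i r).1, (divNat_modNat_blockPos i r).2]

theorem compiledThread_eq_Dinf (t : Fin n → LinTerm A n) (P : Fin n → BTAinf A) {m : ℤ}
    (h : ¬(1 ≤ m ∧ m ≤ 3 * n)) : compiledThread t P m = Dinf A := by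
  rw [compiledThread, dif_neg h]

theorem extrEqns_compile {t : Fin n → LinTerm A n} {P : Fin n → BTAinf A}
    (hP : IsSolution t P) :
    ExtrEqns (compile t) (compiledThread t P) := by
  intro m
  by_cases hm : 1 ≤ m ∧ m ≤ 3 * n
  swap
  · rw [instAt_compile_eq_none t hm]
    exact compiledThread_eq_Dinf t P hm
  obtain ⟨i, r, rfl⟩ := exists_blockPos_eq hm
  have hPi := hP i
  rw [instAt_compile_blockPos]
  cases ht : t i with
  | S | D =>
    rw [ht] at hPi
    rcases fin_three_cases r with rfl | rfl | rfl <;>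
      simp [LinTerm.block, compiledThread_blockPos, ht, LinTerm.blockThread, hPi]
  | pcc j a k =>
    rw [ht] at hPi
    rcases fin_three_cases r with rfl | rfl | rfl
    · simpa [LinTerm.block, compiledThread_blockPos, ht, LinTerm.blockThread,
        blockPos_zero_add_one, blockPos_zero_add_two] using hPi
    · rcases Instr.jump_cases (A := A) (d := 3 * ((j : ℕ) - (i : ℕ) : ℤ) - 1) (by omega) with
        ⟨k', hk, hkd⟩ | ⟨k', hk, hkd⟩ <;>
      simp only [LinTerm.block, Matrix.cons_val_one, Matrix.cons_val_zero, hk, hkd, sub_neg_eq_add,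
        blockPos_one_add, compiledThread_blockPos, ht, LinTerm.blockThread_zero] <;> rfl
    · rcases Instr.jump_cases (A := A) (d := 3 * ((k : ℕ) - (i : ℕ) : ℤ) - 2) (by omega) with
        ⟨k', hk, hkd⟩ | ⟨k', hk, hkd⟩ <;>
      simp only [LinTerm.block, Matrix.cons_val_two, Matrix.tail_cons, Matrix.head_cons, hk, hkd,
        sub_neg_eq_add, blockPos_two_add, compiledThread_blockPos, ht, LinTerm.blockThread_zero] <;>
      rfl

theorem exists_blockPos_eq_of_succ {t : Fin n → LinTerm A n} {m m' : ℤ}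
    (h : Succ (compile t) m m') : ∃ (i : Fin n) (r : Fin 3), blockPos i r = m' := by
  by_cases hm : 1 ≤ m ∧ m ≤ 3 * n
  swap
  · simp [Succ, instAt_compile_eq_none t hm] at h
  obtain ⟨i, r, rfl⟩ := exists_blockPos_eq hm
  simp only [Succ, instAt_compile_blockPos] at h
  cases ht : t i with
  | S | D =>
    rcases fin_three_cases r with rfl | rfl | rfl <;> simp [ht, LinTerm.block] at h
  | pcc j a k =>
    rcases fin_three_cases r with rfl | rfl | rfl
    · simp only [ht, LinTerm.block, Matrix.cons_val_zero] at h
      rcases h with rfl | rfl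
      exacts [⟨i, 1, blockPos_zero_add_one i⟩, ⟨i, 2, blockPos_zero_add_two i⟩]
    · refine ⟨j, 0, ?_⟩
      rcases Instr.jump_cases (A := A) (d := 3 * ((j : ℕ) - (i : ℕ) : ℤ) - 1) (by omega) with
        ⟨k', hk, hkd⟩ | ⟨k', hk, hkd⟩ <;>
      simp only [ht, LinTerm.block, Matrix.cons_val_one, Matrix.cons_val_zero, hk, hkd,
        sub_neg_eq_add] at h <;>
      rw [h, blockPos_one_add]
    · refine ⟨k, 0, ?_⟩
      rcases Instr.jump_cases (A := A) (d := 3 * ((k : ℕ) - (i : ℕ) : ℤ) - 2) (by omega) with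
        ⟨k', hk, hkd⟩ | ⟨k', hk, hkd⟩ <;>
      simp only [ht, LinTerm.block, Matrix.cons_val_two, Matrix.tail_cons, Matrix.head_cons, hk,
        hkd, sub_neg_eq_add] at h <;>
      rw [h, blockPos_two_add]

theorem cProgram_compile (t : Fin n → LinTerm A n) (hn : 0 < n) : CProgram (compile t) := by
  have hlen : ((compile t).length : ℤ) = 3 * n := by rw [length_compile]; push_cast; ring
  refine ⟨fun h => by simp [h] at hlen; omega, fun j j' hj hjn hjj' => ?_⟩
  rw [hlen] at hjn ⊢
  induction hjj' with
  | refl => omega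
  | tail _ hstep =>
    obtain ⟨i, r, rfl⟩ := exists_blockPos_eq_of_succ hstep
    exact blockPos_mem_range i r

theorem blockPos_of_jumpsTo_compile {t : Fin n → LinTerm A n} {m m' : ℤ}
    (h : JumpsTo (compile t) m m') :
    (∃ (i : Fin n) (r : Fin 3), r ≠ 0 ∧ blockPos i r = m) ∧
      ∃ j : Fin n, blockPos j 0 = m' := by
  have hm : 1 ≤ m ∧ m ≤ 3 * n := by
    by_contra hm
    simp [JumpsTo, instAt_compile_eq_none t hm] at h
  obtain ⟨i, r, rfl⟩ := exists_blockPos_eq hm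
  simp only [JumpsTo, instAt_compile_blockPos, Option.some.injEq] at h
  cases ht : t i with
  | S | D =>
    rcases fin_three_cases r with rfl | rfl | rfl <;> simp [ht, LinTerm.block] at h
  | pcc j a k =>
    rcases fin_three_cases r with rfl | rfl | rfl
    · simp [ht, LinTerm.block] at h
    · refine ⟨⟨i, 1, by simp, rfl⟩, j, ?_⟩
      simp only [ht, LinTerm.block, Matrix.cons_val_one, Matrix.cons_val_zero,
        Instr.jump_eq_fjump_iff, Instr.jump_eq_bjump_iff] at h
      have := blockPos_one_add i j
      rcases h with ⟨_, hk, rfl⟩ | ⟨_, hk, rfl⟩ <;> omega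
    · refine ⟨⟨i, 2, by simp, rfl⟩, k, ?_⟩
      simp only [ht, LinTerm.block, Matrix.cons_val_two, Matrix.tail_cons, Matrix.head_cons,
        Instr.jump_eq_fjump_iff, Instr.jump_eq_bjump_iff] at h
      have := blockPos_two_add i k
      rcases h with ⟨_, hk, rfl⟩ | ⟨_, hk, rfl⟩ <;> omega

theorem not_inJumpLoop_compile (t : Fin n → LinTerm A n) (m : ℤ) :
    ¬InJumpLoop (compile t) m := by
  rintro ⟨f, -, hf⟩
  obtain ⟨-, j, hj⟩ := blockPos_of_jumpsTo_compile (hf 0)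
  obtain ⟨⟨i, r, hr, hi⟩, -⟩ := blockPos_of_jumpsTo_compile (hf 1)
  rw [← hj] at hi
  simp only [blockPos, Fin.val_zero] at hi
  exact hr (Fin.ext (by omega))

end Compile

/-- Every regular thread (a component `P i` of the solution of a finite
linear recursive specification) is produced by a `C`-program `X` via
left-to-right thread extraction, `⌊X⌋₁ = P i`; moreover `X` can be chosen
using only instructions from `{+/a, /#k, #k\, !, #}`. -/
theorem regular_thread_produced_by_program {A : Type} {n : ℕ}
    (t : Fin n → LinTerm A n) (P : Fin n → BTAinf A)
    (hP : IsSolution t P) (i : Fin n) :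
    ∃ X : List (Instr A), CProgram X ∧ (∀ ins ∈ X, InReducedSet ins) ∧
      ∃ T : ℤ → BTAinf A, ExtrEqns X T ∧ LoopRule X T ∧ T 1 = P i := by
  have hn : 0 < n := i.pos
  let e := Equiv.swap ⟨0, hn⟩ i
  let t' : Fin n → LinTerm A n := fun x => (t (e x)).rename e.symm
  refine ⟨compile t', cProgram_compile t' hn, fun _ => inReducedSet_of_mem_compile,
    compiledThread t' (P ∘ e), extrEqns_compile (hP.relabel e),
    fun m hm => (not_inJumpLoop_compile t' m hm).elim, ?_⟩
  have hfirst : blockPos (⟨0, hn⟩ : Fin n) 0 = 1 := by simp [blockPos]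
  rw [← hfirst, compiledThread_blockPos, LinTerm.blockThread_zero]
  exact congrArg P (Equiv.swap_apply_left _ _)
end

section
/- For every k ∈ ℕ there exists n ∈ ℕ⁺ such that no C-expression whose jump instructions all have counter at most k has the a-n-property; consequently, for every k there is a finite BTA thread that is not the thread extraction (from any position) of any expression in C_k. -/
/-- The embedding of finite threads into `BTA^∞` via approximations. -/
def embed {A : Type} (P : BTA A) : BTAinf A :=
  ⟨fun n => BTA.pi n P, fun n => BTA.pi_pi n P⟩

/-- The finite thread `aⁿ ∘ D`. -/
def aPowD {A : Type} (a : A) : ℕ → BTA A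
  | 0 => BTA.D
  | n+1 => BTA.pcc (aPowD a n) a (aPowD a n)

/-- `NRes m P Q`: `Q` is an `m`-residual of `P`. -/
inductive NRes {A : Type} : ℕ → BTAinf A → BTAinf A → Prop
  | zero (P : BTAinf A) : NRes 0 P P
  | left (m : ℕ) (b : A) (P1 P2 Q : BTAinf A) :
      NRes m P1 Q → NRes (m+1) (pccInf b P1 P2) Q
  | right (m : ℕ) (b : A) (P1 P2 Q : BTAinf A) :
      NRes m P2 Q → NRes (m+1) (pccInf b P1 P2) Q

/-- The `a-n`-property of a thread `P`: `π(n,P) = aⁿ ∘ D` and `P` has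
`2ⁿ−1` pairwise distinct `n`-residuals, each of whose first approximation
differs from `a ∘ D`. -/
def HasAN {A : Type} (a : A) (n : ℕ) (P : BTAinf A) : Prop :=
  P.1 n = aPowD a n ∧
  ∃ R : Fin (2^n - 1) → BTAinf A, Function.Injective R ∧
    ∀ m : Fin (2^n - 1),
      NRes n P (R m) ∧ (R m).1 1 ≠ BTA.pcc BTA.D a BTA.D

/-- A `C`-expression has the `a-n`-property if its thread extraction at some
position has it. -/
def HasANExpr {A : Type} (a : A) (n : ℕ) (X : List (Instr A)) : Prop :=
  ∃ (T : ℤ → BTAinf A) (i : ℤ),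
    ExtrEqns X T ∧ LoopRule X T ∧ HasAN a n (T i)

/-- All jump counters occurring in `X` are at most `k` (membership in `C_k`). -/
def JumpBounded {A : Type} (k : ℕ) (X : List (Instr A)) : Prop :=
  ∀ ins ∈ X,
    match ins with
    | Instr.fjump m => (m : ℕ) ≤ k
    | Instr.bjump m => (m : ℕ) ≤ k
    | _ => True

/-!
A thread extracted from an expression of `C_k` whose first levels form a complete binary tree of
pairwise distinct residuals other than `D` yields a drawing of that tree on the integer line: node
`u` sits at the action producing its thread, and the edge to a child runs through the jumps
(length at most `k`) following the step (length at most `2`) out of that action. Distinct routes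
meet only at nodes. Such a drawing of depth `h` with steps at most `K` is impossible once
`h ≥ 6K + 3`. On the one hand, every route crossing the cut between `c` and `c + 1` passes through
the window `(c - K, c]`, whose points lie on at most three routes each, so at most `3K` routes
cross any cut. On the other hand, recursing into a depth-two subtree that avoids the two routes
carrying the extreme points produces a cut crossed by `h / 2` routes. The `a`-`n`-property for
`n = 6k + 17` gives such a tree below depth two, and so does a finite tree whose subtrees all have
distinct depths.
-/

namespace BTA

variable {A : Type}

theorem pi_pi_of_le : ∀ {m n : ℕ} (P : BTA A), m ≤ n → pi m (pi n P) = pi m P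
  | 0, _, _, _ => rfl
  | _ + 1, 0, _, h => absurd h (Nat.not_succ_le_zero _)
  | _ + 1, _ + 1, S, _ => rfl
  | _ + 1, _ + 1, D, _ => rfl
  | m + 1, n + 1, pcc P b Q, h => by
    have hmn := Nat.le_of_succ_le_succ h
    simp only [pi, pi_pi_of_le P hmn, pi_pi_of_le Q hmn]

/-- The left (`false`) or right (`true`) argument of a postconditional composition. -/
def child : Bool → BTA A → BTA A
  | false, pcc P _ _ => P
  | true, pcc _ _ Q => Q
  | _, _ => D

theorem pi_child (n : ℕ) (x : Bool) (P : BTA A) : pi n (child x P) = child x (pi (n + 1) P) := by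
  cases x <;> cases P <;> cases n <;> rfl

theorem eq_pcc_of_pi_one {P : BTA A} {b : A} (h : pi 1 P = pcc D b D) :
    P = pcc (child false P) b (child true P) := by
  cases P <;> cases h
  rfl

def depth : BTA A → ℕ
  | S => 0
  | D => 0
  | pcc P _ Q => max (depth P) (depth Q) + 1

theorem pi_of_depth_lt : ∀ {n : ℕ} (P : BTA A), depth P < n → pi n P = P
  | 0, _, h => absurd h (Nat.not_lt_zero _)
  | _ + 1, S, _ => rfl
  | _ + 1, D, _ => rfl
  | n + 1, pcc P b Q, h => by
    simp only [depth, Nat.add_lt_add_iff_right, max_lt_iff] at h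
    simp only [pi, pi_of_depth_lt P h.1, pi_of_depth_lt Q h.2]

end BTA

namespace BTAinf

variable {A : Type}

theorem val_zero (v : BTAinf A) : v.1 0 = BTA.D := by
  rw [← v.2 0]; rfl

theorem pi_val_of_le (v : BTAinf A) {m n : ℕ} (h : m ≤ n) : BTA.pi m (v.1 n) = v.1 m := by
  induction n, h using Nat.le_induction with
  | base => rw [← v.2 m, BTA.pi_pi_of_le _ le_rfl]
  | succ n hmn ih => rw [← ih, ← v.2 n, BTA.pi_pi_of_le _ hmn]

def child (x : Bool) (v : BTAinf A) : BTAinf A :=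
  ⟨fun n => BTA.child x (v.1 (n + 1)), fun n => by rw [BTA.pi_child, v.2]⟩

def desc (v : BTAinf A) (u : List Bool) : BTAinf A :=
  u.foldl (fun w x => w.child x) v

@[simp] theorem desc_nil (v : BTAinf A) : v.desc [] = v := rfl

theorem desc_append (v : BTAinf A) (u w : List Bool) : v.desc (u ++ w) = (v.desc u).desc w :=
  List.foldl_append

theorem desc_concat (v : BTAinf A) (u : List Bool) (x : Bool) :
    v.desc (u ++ [x]) = (v.desc u).child x :=
  List.foldl_concat _ _ _ _

end BTAinf

section Threads

variable {A : Type}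

@[simp] theorem child_pccInf (x : Bool) (b : A) (v₀ v₁ : BTAinf A) :
    (pccInf b v₀ v₁).child x = cond x v₁ v₀ := by
  cases x <;> rfl

theorem pccInf_val_one (b : A) (v₀ v₁ : BTAinf A) :
    (pccInf b v₀ v₁).1 1 = BTA.pcc BTA.D b BTA.D := by
  show BTA.pcc (v₀.1 0) b (v₁.1 0) = _
  rw [v₀.val_zero, v₁.val_zero]

theorem pccInf_ne_Dinf (b : A) (v₀ v₁ : BTAinf A) : pccInf b v₀ v₁ ≠ Dinf A :=
  fun h => by cases (pccInf_val_one b v₀ v₁).symm.trans (congrArg (·.1 1) h)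

theorem pccInf_ne_Sinf (b : A) (v₀ v₁ : BTAinf A) : pccInf b v₀ v₁ ≠ Sinf A :=
  fun h => by cases (pccInf_val_one b v₀ v₁).symm.trans (congrArg (·.1 1) h)

theorem eq_pccInf_child {v : BTAinf A} {b : A} (h : v.1 1 = BTA.pcc BTA.D b BTA.D) :
    v = pccInf b (v.child false) (v.child true) := by
  refine Subtype.ext (funext fun n => ?_)
  cases n with
  | zero => exact v.val_zero
  | succ n => exact BTA.eq_pcc_of_pi_one ((v.pi_val_of_le (by omega)).trans h)

theorem embed_pcc (P Q : BTA A) (b : A) :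
    embed (BTA.pcc P b Q) = pccInf b (embed P) (embed Q) :=
  Subtype.ext (funext fun n => by cases n <;> rfl)

theorem embed_injective : Function.Injective (embed (A := A)) := by
  intro P Q h
  have hPQ : BTA.pi (max P.depth Q.depth + 1) P = BTA.pi (max P.depth Q.depth + 1) Q :=
    congrArg (·.1 (max P.depth Q.depth + 1)) h
  rwa [BTA.pi_of_depth_lt P (by omega), BTA.pi_of_depth_lt Q (by omega)] at hPQ

theorem embed_D : embed (BTA.D : BTA A) = Dinf A :=
  Subtype.ext (funext fun n => by cases n <;> rfl)

end Threads

theorem exists_length_two_not_prefix (B : Finset (List Bool)) (hB : B.card < 4) :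
    ∃ w : List Bool, w.length = 2 ∧ ∀ s ∈ B, ¬ w <+: s := by
  by_contra! H
  have hsub : ({[false, false], [false, true], [true, false], [true, true]} :
      Finset (List Bool)) ⊆ B.image (List.take 2) := by
    intro w hw
    have hlen : w.length = 2 := by
      simp only [Finset.mem_insert, Finset.mem_singleton] at hw
      rcases hw with rfl | rfl | rfl | rfl <;> rfl
    obtain ⟨s, hs, hws⟩ := H w hlen
    exact Finset.mem_image.2 ⟨s, hs, (hlen ▸ List.prefix_iff_eq_take.1 hws).symm⟩
  have h4 : ({[false, false], [false, true], [true, false], [true, true]} :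
      Finset (List Bool)).card = 4 := rfl
  have := (Finset.card_le_card hsub).trans Finset.card_image_le
  omega

theorem List.Vector.card_image_toList (α : Type*) [Fintype α] [DecidableEq α] (n : ℕ) :
    ((Finset.univ : Finset (List.Vector α n)).image List.Vector.toList).card =
      Fintype.card α ^ n := by
  rw [Finset.card_image_of_injective _ List.Vector.toList_injective, Finset.card_univ, card_vector]

theorem List.Vector.mem_image_toList {α : Type*} [Fintype α] [DecidableEq α] {n : ℕ}
    {s : List α} :
    s ∈ (Finset.univ : Finset (List.Vector α n)).image List.Vector.toList ↔ s.length = n :=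
  ⟨fun hs => by obtain ⟨v, -, rfl⟩ := Finset.mem_image.1 hs; exact v.toList_length,
    fun hs => Finset.mem_image.2 ⟨⟨s, hs⟩, Finset.mem_univ _, rfl⟩⟩

theorem Relation.ReflTransGen.exists_step_across {α : Type*} [LinearOrder α] {r : α → α → Prop}
    {a b c : α} (h : Relation.ReflTransGen r a b) (hab : min a b ≤ c ∧ c < max a b) :
    ∃ z z', r z z' ∧ min z z' ≤ c ∧ c < max z z' := by
  induction h with
  | refl => exact absurd hab.2 (not_lt.2 (by simpa using hab.1))
  | @tail y z _ hyz ih =>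
    by_cases hay : min a y ≤ c ∧ c < max a y
    · exact ih hay
    · refine ⟨y, z, hyz, ?_⟩
      simp only [min_le_iff, lt_max_iff, not_and_or, not_or, not_le, not_lt] at hab hay ⊢
      grind

theorem List.length_append_singleton_le {α : Type*} {u : List α} {x : α} {n : ℕ}
    (hu : u.length < n) : (u ++ [x]).length ≤ n := by
  rw [List.length_append, List.length_singleton]; omega

/-- A drawing of the complete binary tree of depth `h` on the integer line: node `u` sits at
`pos u`, and the edge `e = (u, x)` from `u` to its child `u ++ [x]` is drawn as the route
`pos u, inner e, pos (u ++ [x])` with steps of length at most `K`. -/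
structure TreeLayout (K h : ℕ) where
  pos : List Bool → ℤ
  inner : List Bool × Bool → List ℤ
  pos_injOn : Set.InjOn pos {u | u.length ≤ h}
  isChain : ∀ e : List Bool × Bool, e.1.length < h →
    (pos e.1 :: (inner e ++ [pos (e.1 ++ [e.2])])).IsChain fun z z' => (z' - z).natAbs ≤ K
  inner_ne_pos : ∀ e : List Bool × Bool, e.1.length < h → ∀ z ∈ inner e,
    ∀ v : List Bool, v.length ≤ h → z ≠ pos v
  inner_disjoint : ∀ e e' : List Bool × Bool, e.1.length < h → e'.1.length < h →
    ∀ z ∈ inner e, z ∈ inner e' → e = e'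

def Crossing (c : ℤ) (l : List ℤ) : Prop :=
  ∃ z z', [z, z'] <:+: l ∧ min z z' ≤ c ∧ c < max z z'

namespace TreeLayout

variable {K h : ℕ} (E : TreeLayout K h)

def route (e : List Bool × Bool) : List ℤ :=
  E.pos e.1 :: (E.inner e ++ [E.pos (e.1 ++ [e.2])])

def points : Set ℤ := {z | ∃ e : List Bool × Bool, e.1.length < h ∧ z ∈ E.route e}

theorem points_finite : E.points.Finite := by
  have hedges : {e : List Bool × Bool | e.1.length < h}.Finite :=
    ((List.finite_length_lt Bool h).prod Set.finite_univ).subset fun e he => ⟨he, trivial⟩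
  refine (hedges.biUnion fun e _ => (E.route e).finite_toSet).subset ?_
  rintro z ⟨e, he, hz⟩
  exact Set.mem_biUnion he hz

theorem mem_route {z : ℤ} {e : List Bool × Bool} :
    z ∈ E.route e ↔ z = E.pos e.1 ∨ z ∈ E.inner e ∨ z = E.pos (e.1 ++ [e.2]) := by
  simp [route]

theorem card_filter_mem_route_le (S : Finset (List Bool × Bool)) (hS : ∀ e ∈ S, e.1.length < h)
    (z : ℤ) : (S.filter (z ∈ E.route ·)).card ≤ 3 := by
  by_cases hnode : ∃ v : List Bool, v.length ≤ h ∧ z = E.pos v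
  · obtain ⟨v, hv, rfl⟩ := hnode
    refine (Finset.card_le_card fun e he => ?_).trans
      (Finset.card_le_three (a := (v, false)) (b := (v, true))
        (c := (v.dropLast, v.getLast?.getD false)))
    obtain ⟨heS, hz⟩ := Finset.mem_filter.1 he
    have hlen := hS e heS
    rcases E.mem_route.1 hz with hz | hz | hz
    · obtain rfl := E.pos_injOn hv (show e.1.length ≤ h by omega) hz
      rcases e with ⟨u, _ | _⟩ <;> simp
    · exact absurd rfl (E.inner_ne_pos e hlen _ hz v hv)
    · obtain rfl := E.pos_injOn hv (List.length_append_singleton_le hlen) hz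
      simp
  · simp only [not_exists, not_and] at hnode
    have hinner : ∀ e ∈ S.filter (z ∈ E.route ·), z ∈ E.inner e := by
      intro e he
      obtain ⟨heS, hz⟩ := Finset.mem_filter.1 he
      have hlen := hS e heS
      rcases E.mem_route.1 hz with hz | hz | hz
      · exact absurd hz (hnode _ hlen.le)
      · exact hz
      · exact absurd hz (hnode _ (List.length_append_singleton_le hlen))
    refine (Finset.card_le_one.2 fun e he e' he' => ?_).trans (by norm_num)
    exact E.inner_disjoint e e' (hS e (Finset.mem_filter.1 he).1)
      (hS e' (Finset.mem_filter.1 he').1) z (hinner e he) (hinner e' he')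

/-- Each route crossing the cut meets the window `(c - K, c]`, and each point of the line lies
on at most three routes. -/
theorem card_le_of_crossing (c : ℤ) (S : Finset (List Bool × Bool))
    (hS : ∀ e ∈ S, e.1.length < h ∧ Crossing c (E.route e)) : S.card ≤ 3 * K := by
  have hsub : S ⊆ (Finset.Icc (c - K + 1) c).biUnion fun z => S.filter (z ∈ E.route ·) := by
    intro e he
    obtain ⟨hlen, z, z', hinfix, hcross⟩ := hS e he
    have hstep : (z' - z).natAbs ≤ K :=
      (List.isChain_pair (R := fun z z' : ℤ => (z' - z).natAbs ≤ K)).1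
        ((E.isChain e hlen).infix hinfix)
    refine Finset.mem_biUnion.2
      ⟨min z z', Finset.mem_Icc.2 (by omega), Finset.mem_filter.2 ⟨he, hinfix.subset ?_⟩⟩
    rcases min_choice z z' with h | h <;> simp [h]
  calc S.card ≤ _ := Finset.card_le_card hsub
    _ ≤ (Finset.Icc (c - K + 1) c).card * 3 :=
      Finset.card_biUnion_le_card_mul _ _ _ fun z _ =>
        E.card_filter_mem_route_le S (fun e he => (hS e he).1) z
    _ = 3 * K := by rw [Int.card_Icc]; omega

def subtree (w : List Bool) (hw : w.length ≤ h) : TreeLayout K (h - w.length) where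
  pos u := E.pos (w ++ u)
  inner e := E.inner (w ++ e.1, e.2)
  pos_injOn u hu v hv huv :=
    List.append_cancel_left (E.pos_injOn (show (w ++ u).length ≤ h by grind)
      (show (w ++ v).length ≤ h by grind) huv)
  isChain e he := by
    simpa only [List.append_assoc] using E.isChain (w ++ e.1, e.2) (by grind)
  inner_ne_pos e he z hz v hv :=
    E.inner_ne_pos (w ++ e.1, e.2) (by grind) z hz (w ++ v) (by grind)
  inner_disjoint e e' he he' z hz hz' := by
    have := E.inner_disjoint (w ++ e.1, e.2) (w ++ e'.1, e'.2) (by grind) (by grind)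
      z hz hz'
    simp only [Prod.mk.injEq, List.append_cancel_left_eq] at this
    exact Prod.ext this.1 this.2

theorem subtree_route (w : List Bool) (hw : w.length ≤ h) (e : List Bool × Bool) :
    (E.subtree w hw).route e = E.route (w ++ e.1, e.2) := by
  simp only [route, subtree, List.append_assoc]

theorem points_subtree_subset (w : List Bool) (hw : w.length ≤ h) :
    (E.subtree w hw).points ⊆ E.points := by
  rintro z ⟨e, he, hz⟩
  exact ⟨(w ++ e.1, e.2), by grind, E.subtree_route w hw e ▸ hz⟩

/-- Any two points lying on routes of edges outside the subtree rooted at `w` are joined through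
the root by steps along such routes. -/
theorem exists_crossing_outside (w : List Bool) {e₁ e₂ : List Bool × Bool}
    (he₁ : e₁.1.length < h) (he₂ : e₂.1.length < h) (hw₁ : ¬ w <+: e₁.1) (hw₂ : ¬ w <+: e₂.1)
    {z₁ z₂ c : ℤ} (hz₁ : z₁ ∈ E.route e₁) (hz₂ : z₂ ∈ E.route e₂) (hc₁ : z₁ ≤ c) (hc₂ : c < z₂) :
    ∃ e : List Bool × Bool, e.1.length < h ∧ ¬ w <+: e.1 ∧ Crossing c (E.route e) := by
  let Adj : ℤ → ℤ → Prop := fun z z' =>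
    ∃ e : List Bool × Bool, e.1.length < h ∧ ¬ w <+: e.1 ∧ [z, z'] <:+: E.route e
  have along : ∀ e : List Bool × Bool, e.1.length < h → ¬ w <+: e.1 →
      ∀ z ∈ E.route e, Relation.ReflTransGen Adj (E.pos e.1) z := fun e he hw =>
    (List.isChain_isInfix (E.route e)).induction _ _
      (fun _ _ hinfix hreach => hreach.tail ⟨e, he, hw, hinfix⟩) fun _ => .refl
  have to_pos : ∀ u : List Bool, u.length ≤ h → ¬ w <+: u →
      Relation.ReflTransGen Adj (E.pos []) (E.pos u) := by
    intro u
    induction u using List.reverseRecOn with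
    | nil => exact fun _ _ => .refl
    | append_singleton u x ih =>
      intro hu hw
      have hu' : u.length < h := by grind
      have hwu : ¬ w <+: u := fun hp => hw (hp.trans (List.prefix_append u [x]))
      exact (ih hu'.le hwu).trans (along (u, x) hu' hwu _ (E.mem_route.2 (.inr (.inr rfl))))
  have reach : ∀ e : List Bool × Bool, e.1.length < h → ¬ w <+: e.1 →
      ∀ z ∈ E.route e, Relation.ReflTransGen Adj (E.pos []) z := fun e he hw z hz =>
    (to_pos e.1 he.le hw).trans (along e he hw z hz)
  have hstraddle : (min (E.pos []) z₁ ≤ c ∧ c < max (E.pos []) z₁) ∨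
      (min (E.pos []) z₂ ≤ c ∧ c < max (E.pos []) z₂) := by
    rcases le_or_gt (E.pos []) c with h0 | h0
    · exact .inr ⟨min_le_left _ _ |>.trans h0, lt_max_of_lt_right hc₂⟩
    · exact .inl ⟨min_le_right _ _ |>.trans hc₁, lt_max_of_lt_left h0⟩
  obtain ⟨z, z', ⟨e, he, hw, hinfix⟩, hcross⟩ :
      ∃ z z', Adj z z' ∧ min z z' ≤ c ∧ c < max z z' := by
    rcases hstraddle with hs | hs
    · exact (reach e₁ he₁ hw₁ z₁ hz₁).exists_step_across hs
    · exact (reach e₂ he₂ hw₂ z₂ hz₂).exists_step_across hs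
  exact ⟨e, he, hw, z, z', hinfix, hcross⟩

theorem exists_extreme_points (hh : 0 < h) :
    ∃ e₁ e₂ : List Bool × Bool, e₁.1.length < h ∧ e₂.1.length < h ∧
      ∃ z₁ ∈ E.route e₁, ∃ z₂ ∈ E.route e₂, ∀ z ∈ E.points, z₁ ≤ z ∧ z ≤ z₂ := by
  have hne : E.points.Nonempty :=
    ⟨E.pos [], ([], false), by simpa using hh, E.mem_route.2 (.inl rfl)⟩
  obtain ⟨z₁, ⟨e₁, he₁, hz₁⟩, hmin⟩ := Set.exists_min_image _ id E.points_finite hne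
  obtain ⟨z₂, ⟨e₂, he₂, hz₂⟩, hmax⟩ := Set.exists_max_image _ id E.points_finite hne
  exact ⟨e₁, e₂, he₁, he₂, z₁, hz₁, z₂, hz₂, fun z hz => ⟨hmin z hz, hmax z hz⟩⟩

theorem exists_points_separated (hh : 0 < h) :
    ∃ c : ℤ, (∃ z ∈ E.points, z ≤ c) ∧ ∃ z ∈ E.points, c < z := by
  have hroot : E.pos [] ∈ E.points := ⟨([], true), hh, E.mem_route.2 (.inl rfl)⟩
  have hchild : E.pos [true] ∈ E.points := ⟨([], true), hh, E.mem_route.2 (.inr (.inr rfl))⟩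
  have hne : E.pos [] ≠ E.pos [true] := fun heq =>
    List.cons_ne_nil _ _ (E.pos_injOn (show [true].length ≤ h from hh)
      (show ([] : List Bool).length ≤ h from hh.le) heq.symm)
  rcases lt_or_gt_of_ne hne with hlt | hlt
  · exact ⟨E.pos [], ⟨_, hroot, le_rfl⟩, _, hchild, hlt⟩
  · exact ⟨E.pos [true], ⟨_, hchild, le_rfl⟩, _, hroot, hlt⟩

/-- Recursing into a depth-two subtree that avoids the edges carrying the extreme points, the
cut found there is crossed by one more route outside that subtree. -/
theorem exists_cut (m : ℕ) (hh : 2 * m + 1 ≤ h) :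
    ∃ (c : ℤ) (S : Finset (List Bool × Bool)), m ≤ S.card ∧
      (∀ e ∈ S, e.1.length < h ∧ Crossing c (E.route e)) ∧
      (∃ z ∈ E.points, z ≤ c) ∧ ∃ z ∈ E.points, c < z := by
  induction m generalizing h with
  | zero =>
    obtain ⟨c, hc⟩ := E.exists_points_separated (by omega)
    exact ⟨c, ∅, le_rfl, by simp, hc⟩
  | succ m ih =>
    classical
    obtain ⟨e₁, e₂, he₁, he₂, z₁, hz₁, z₂, hz₂, hext⟩ := E.exists_extreme_points (by omega)
    obtain ⟨w, hw, hwe⟩ := exists_length_two_not_prefix {e₁.1, e₂.1}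
      ((Finset.card_le_two).trans_lt (by norm_num))
    have hwh : w.length ≤ h := by omega
    obtain ⟨c, S, hS, hcross, ⟨y₁, hy₁, hyc₁⟩, ⟨y₂, hy₂, hyc₂⟩⟩ :=
      ih (E.subtree w hwh) (by omega)
    obtain ⟨e, he, hwe', hcross'⟩ := E.exists_crossing_outside w he₁ he₂
      (hwe _ (by simp)) (hwe _ (by simp)) hz₁ hz₂
      ((hext y₁ (E.points_subtree_subset w hwh hy₁)).1.trans hyc₁)
      (hyc₂.trans_le (hext y₂ (E.points_subtree_subset w hwh hy₂)).2)
    let shift : List Bool × Bool ↪ List Bool × Bool :=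
      ⟨fun e => (w ++ e.1, e.2), fun e e' h => by
        simp only [Prod.mk.injEq, List.append_cancel_left_eq] at h; exact Prod.ext h.1 h.2⟩
    have he_new : e ∉ S.map shift := by
      simp only [Finset.mem_map]
      rintro ⟨e', -, rfl⟩
      exact hwe' (List.prefix_append _ _)
    refine ⟨c, insert e (S.map shift), ?_, ?_, ⟨y₁, E.points_subtree_subset w hwh hy₁, hyc₁⟩,
      ⟨y₂, E.points_subtree_subset w hwh hy₂, hyc₂⟩⟩
    · rw [Finset.card_insert_of_notMem he_new, Finset.card_map]; omega
    · simp only [Finset.mem_insert, Finset.mem_map]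
      rintro _ (rfl | ⟨e', he', rfl⟩)
      · exact ⟨he, hcross'⟩
      · obtain ⟨hlen, hc⟩ := hcross e' he'
        refine ⟨show (w ++ e'.1).length < h by grind, ?_⟩
        rwa [subtree_route] at hc

theorem isEmpty_of_le (hh : 6 * K + 3 ≤ h) : IsEmpty (TreeLayout K h) := by
  refine ⟨fun E => ?_⟩
  obtain ⟨c, S, hS, hcross, -⟩ := E.exists_cut (3 * K + 1) (by omega)
  have := E.card_le_of_crossing c S hcross
  omega

end TreeLayout

section Extraction

open scoped Classical

variable {A : Type} {X : List (Instr A)} {T : ℤ → BTAinf A}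

def jumpStep (X : List (Instr A)) (j : ℤ) : ℤ :=
  match instAt X j with
  | some (Instr.fjump k) => j + ((k : ℕ) : ℤ)
  | some (Instr.bjump k) => j - ((k : ℕ) : ℤ)
  | _ => j

def IsJumpAt (X : List (Instr A)) (j : ℤ) : Prop := ∃ j', JumpsTo X j j'

theorem JumpsTo.eq_jumpStep {j j' : ℤ} (h : JumpsTo X j j') : j' = jumpStep X j := by
  rcases h with ⟨k, hk, rfl⟩ | ⟨k, hk, rfl⟩ <;> simp [jumpStep, hk]

theorem IsJumpAt.jumpsTo_jumpStep {j : ℤ} (h : IsJumpAt X j) : JumpsTo X j (jumpStep X j) := by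
  obtain ⟨j', hj'⟩ := h
  exact hj'.eq_jumpStep ▸ hj'

theorem JumpsTo.extr_eq (hT : ExtrEqns X T) {j j' : ℤ} (h : JumpsTo X j j') : T j = T j' := by
  have hj := hT j
  rcases h with ⟨k, hk, rfl⟩ | ⟨k, hk, rfl⟩ <;> simpa [hk] using hj

theorem instAt_mem {j : ℤ} {ins : Instr A} (h : instAt X j = some ins) : ins ∈ X := by
  unfold instAt at h
  split_ifs at h
  exact List.mem_of_getElem? h

theorem JumpsTo.natAbs_sub_le {k : ℕ} (hb : JumpBounded k X) {j j' : ℤ} (h : JumpsTo X j j') :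
    (j' - j).natAbs ≤ k := by
  rcases h with ⟨m, hm, rfl⟩ | ⟨m, hm, rfl⟩ <;>
  · have := hb _ (instAt_mem hm)
    simp only at this
    omega

/-- Junk value `0` when the jumps from `j` go on forever. -/
noncomputable def jumpCount (X : List (Instr A)) (j : ℤ) : ℕ :=
  if h : ∃ t, ¬ IsJumpAt X ((jumpStep X)^[t] j) then Nat.find h else 0

noncomputable def jumpEnd (X : List (Instr A)) (j : ℤ) : ℤ := (jumpStep X)^[jumpCount X j] j

noncomputable def jumpTrail (X : List (Instr A)) (j : ℤ) : List ℤ :=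
  (List.range (jumpCount X j)).map fun t => (jumpStep X)^[t] j

theorem exists_not_isJumpAt_iterate (hL : LoopRule X T) {j : ℤ} (hj : T j ≠ Dinf A) :
    ∃ t, ¬ IsJumpAt X ((jumpStep X)^[t] j) := by
  by_contra! hloop
  refine hj (hL j ⟨fun t => (jumpStep X)^[t] j, rfl, fun t => ?_⟩)
  show JumpsTo X _ ((jumpStep X)^[t + 1] j)
  rw [Function.iterate_succ_apply']
  exact (hloop t).jumpsTo_jumpStep

theorem jumpCount_spec (hL : LoopRule X T) {j : ℤ} (hj : T j ≠ Dinf A) :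
    (∀ t < jumpCount X j, IsJumpAt X ((jumpStep X)^[t] j)) ∧ ¬ IsJumpAt X (jumpEnd X j) := by
  have hex := exists_not_isJumpAt_iterate hL hj
  simp only [jumpEnd, jumpCount, dif_pos hex]
  exact ⟨fun t ht => not_not.1 (Nat.find_min hex ht), Nat.find_spec hex⟩

theorem not_isJumpAt_jumpEnd (hL : LoopRule X T) {j : ℤ} (hj : T j ≠ Dinf A) :
    ¬ IsJumpAt X (jumpEnd X j) :=
  (jumpCount_spec hL hj).2

theorem isJumpAt_of_mem_jumpTrail (hL : LoopRule X T) {j : ℤ} (hj : T j ≠ Dinf A) {z : ℤ}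
    (hz : z ∈ jumpTrail X j) : IsJumpAt X z := by
  obtain ⟨t, ht, rfl⟩ := List.mem_map.1 hz
  exact (jumpCount_spec hL hj).1 t (List.mem_range.1 ht)

theorem extr_jumpEnd (hT : ExtrEqns X T) (hL : LoopRule X T) {j : ℤ} (hj : T j ≠ Dinf A) :
    T (jumpEnd X j) = T j := by
  suffices ∀ t ≤ jumpCount X j, T ((jumpStep X)^[t] j) = T j from this _ le_rfl
  intro t ht
  induction t with
  | zero => rfl
  | succ t ih =>
    rw [Function.iterate_succ_apply', ← ih (by omega)]
    exact (((jumpCount_spec hL hj).1 t (by omega)).jumpsTo_jumpStep.extr_eq hT).symm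

theorem jumpEnd_of_mem_jumpTrail (hL : LoopRule X T) {j : ℤ} (hj : T j ≠ Dinf A) {z : ℤ}
    (hz : z ∈ jumpTrail X j) : jumpEnd X z = jumpEnd X j := by
  obtain ⟨t, ht, rfl⟩ := List.mem_map.1 hz
  have ht := List.mem_range.1 ht
  have hspec := jumpCount_spec hL hj
  have hiter : ∀ s, (jumpStep X)^[s] ((jumpStep X)^[t] j) = (jumpStep X)^[s + t] j :=
    fun s => (Function.iterate_add_apply _ _ _ _).symm
  have hex : ∃ s, ¬ IsJumpAt X ((jumpStep X)^[s] ((jumpStep X)^[t] j)) :=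
    ⟨jumpCount X j - t, by rw [hiter, Nat.sub_add_cancel ht.le]; exact hspec.2⟩
  have hcount : jumpCount X ((jumpStep X)^[t] j) = jumpCount X j - t := by
    rw [jumpCount, dif_pos hex, Nat.find_eq_iff]
    refine ⟨by rw [hiter, Nat.sub_add_cancel ht.le]; exact hspec.2, fun s hs => ?_⟩
    rw [hiter, not_not]
    exact hspec.1 _ (by omega)
  rw [jumpEnd, hcount, hiter, Nat.sub_add_cancel ht.le]
  rfl

theorem isChain_jumpTrail {k : ℕ} (hb : JumpBounded k X) (hL : LoopRule X T) {j : ℤ}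
    (hj : T j ≠ Dinf A) :
    (jumpTrail X j ++ [jumpEnd X j]).IsChain fun z z' => (z' - z).natAbs ≤ k := by
  have hlist : jumpTrail X j ++ [jumpEnd X j] =
      (List.range (jumpCount X j + 1)).map fun t => (jumpStep X)^[t] j := by
    rw [List.range_succ, List.map_append]; rfl
  rw [hlist, List.isChain_map, List.isChain_range_succ]
  intro t ht
  rw [Function.iterate_succ_apply']
  exact ((jumpCount_spec hL hj).1 t ht).jumpsTo_jumpStep.natAbs_sub_le hb

theorem head?_jumpTrail_append (j : ℤ) : (jumpTrail X j ++ [jumpEnd X j]).head? = some j := by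
  cases h : jumpCount X j <;> simp [jumpTrail, jumpEnd, h, List.range_succ_eq_map]

end Extraction

section ThreadTree

variable {A : Type} {X : List (Instr A)} {T : ℤ → BTAinf A}

/-- The position where the thread extracted at `p` continues in its left (`x = false`) or right
branch, when `p` holds an action. -/
def entry (X : List (Instr A)) (p : ℤ) (x : Bool) : ℤ :=
  match instAt X p with
  | some (Instr.fbasic _) => p + 1
  | some (Instr.fptest _) => cond x (p + 2) (p + 1)
  | some (Instr.fntest _) => cond x (p + 1) (p + 2)
  | some (Instr.bbasic _) => p - 1
  | some (Instr.bptest _) => cond x (p - 2) (p - 1)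
  | some (Instr.bntest _) => cond x (p - 1) (p - 2)
  | _ => p

theorem natAbs_entry_sub_le (X : List (Instr A)) (p : ℤ) (x : Bool) :
    (entry X p x - p).natAbs ≤ 2 := by
  unfold entry
  split <;> cases x <;> simp

theorem extr_entry (hT : ExtrEqns X T) {p : ℤ} (hp : ¬ IsJumpAt X p) {b : A}
    {v₀ v₁ : BTAinf A} (hpcc : T p = pccInf b v₀ v₁) (x : Bool) :
    T (entry X p x) = cond x v₁ v₀ := by
  have hext := hT p
  rw [← child_pccInf x b v₀ v₁, ← hpcc]
  rcases hins : instAt X p with _ | ins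
  · simp only [hins] at hext
    exact absurd (hpcc.symm.trans hext) (pccInf_ne_Dinf b v₀ v₁)
  cases ins <;> simp only [hins] at hext
  case halt => exact absurd (hpcc.symm.trans hext) (pccInf_ne_Sinf b v₀ v₁)
  case abort => exact absurd (hpcc.symm.trans hext) (pccInf_ne_Dinf b v₀ v₁)
  case fjump k => exact absurd ⟨_, .inl ⟨k, hins, rfl⟩⟩ hp
  case bjump k => exact absurd ⟨_, .inr ⟨k, hins, rfl⟩⟩ hp
  all_goals cases x <;> simp [entry, hins, hext]

theorem exists_extr_eq_child (hT : ExtrEqns X T) (hL : LoopRule X T) {j : ℤ} {b : A}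
    {v₀ v₁ : BTAinf A} (hj : T j = pccInf b v₀ v₁) (x : Bool) : ∃ j', T j' = cond x v₁ v₀ := by
  have hD : T j ≠ Dinf A := hj ▸ pccInf_ne_Dinf b v₀ v₁
  exact ⟨_, extr_entry hT (not_isJumpAt_jumpEnd hL hD) ((extr_jumpEnd hT hL hD).trans hj) x⟩

structure IsThreadTree (h : ℕ) (V : List Bool → BTAinf A) : Prop where
  eq_pccInf : ∀ u : List Bool, u.length < h →
    ∃ b, V u = pccInf b (V (u ++ [false])) (V (u ++ [true]))
  ne_Dinf : ∀ u : List Bool, u.length ≤ h → V u ≠ Dinf A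
  injOn : Set.InjOn V {u | u.length ≤ h}

noncomputable def nodePos (X : List (Instr A)) (i : ℤ) (u : List Bool) : ℤ :=
  u.foldl (fun p x => jumpEnd X (entry X p x)) (jumpEnd X i)

theorem nodePos_concat (X : List (Instr A)) (i : ℤ) (u : List Bool) (x : Bool) :
    nodePos X i (u ++ [x]) = jumpEnd X (entry X (nodePos X i u) x) :=
  List.foldl_concat _ _ _ _

namespace IsThreadTree

variable {h : ℕ} {V : List Bool → BTAinf A}

theorem extr_entry_nodePos (hV : IsThreadTree h V) (hT : ExtrEqns X T) {i : ℤ} {u : List Bool}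
    (hu : u.length < h) (hnode : T (nodePos X i u) = V u)
    (hnj : ¬ IsJumpAt X (nodePos X i u)) (x : Bool) :
    T (entry X (nodePos X i u) x) = V (u ++ [x]) := by
  obtain ⟨b, hb⟩ := hV.eq_pccInf u hu
  rw [extr_entry hT hnj (hnode.trans hb) x]
  cases x <;> rfl

theorem extr_nodePos (hV : IsThreadTree h V) (hT : ExtrEqns X T) (hL : LoopRule X T) {i : ℤ}
    (hi : T i = V []) (u : List Bool) (hu : u.length ≤ h) :
    T (nodePos X i u) = V u ∧ ¬ IsJumpAt X (nodePos X i u) := by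
  induction u using List.reverseRecOn with
  | nil =>
    have hD : T i ≠ Dinf A := hi ▸ hV.ne_Dinf [] (Nat.zero_le h)
    exact ⟨(extr_jumpEnd hT hL hD).trans hi, not_isJumpAt_jumpEnd hL hD⟩
  | append_singleton u x ih =>
    have hu' : u.length < h := by grind
    obtain ⟨hnode, hnj⟩ := ih hu'.le
    have hentry := hV.extr_entry_nodePos hT hu' hnode hnj x
    have hD : T (entry X (nodePos X i u) x) ≠ Dinf A := hentry ▸ hV.ne_Dinf _ hu
    rw [nodePos_concat]
    exact ⟨(extr_jumpEnd hT hL hD).trans hentry, not_isJumpAt_jumpEnd hL hD⟩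

theorem extr_entry_nodePos_ne_Dinf (hV : IsThreadTree h V) (hT : ExtrEqns X T)
    (hL : LoopRule X T) {i : ℤ} (hi : T i = V []) {u : List Bool} (hu : u.length < h) (x : Bool) :
    T (entry X (nodePos X i u) x) ≠ Dinf A := by
  obtain ⟨hnode, hnj⟩ := hV.extr_nodePos hT hL hi u hu.le
  rw [hV.extr_entry_nodePos hT hu hnode hnj x]
  exact hV.ne_Dinf _ (List.length_append_singleton_le hu)

/-- A route makes one step of length at most `2` after the action at `u`, then jumps of length at
most `k`. Routes meet only at nodes, since a jump determines where its chain of jumps ends and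
nodes hold actions. -/
noncomputable def layout {k : ℕ} (hV : IsThreadTree h V) (hb : JumpBounded k X)
    (hT : ExtrEqns X T) (hL : LoopRule X T) {i : ℤ} (hi : T i = V []) :
    TreeLayout (k + 2) h where
  pos := nodePos X i
  inner e := jumpTrail X (entry X (nodePos X i e.1) e.2)
  pos_injOn u hu v hv huv :=
    hV.injOn hu hv ((hV.extr_nodePos hT hL hi u hu).1.symm.trans
      (huv ▸ (hV.extr_nodePos hT hL hi v hv).1))
  isChain e he := by
    have hD := hV.extr_entry_nodePos_ne_Dinf hT hL hi he e.2
    rw [nodePos_concat, List.isChain_cons, head?_jumpTrail_append]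
    refine ⟨fun y hy => ?_, (isChain_jumpTrail hb hL hD).imp fun z z' hzz' => by omega⟩
    obtain rfl := Option.mem_some_iff.1 hy
    have := natAbs_entry_sub_le X (nodePos X i e.1) e.2
    omega
  inner_ne_pos e he z hz v hv hzv := by
    have hD := hV.extr_entry_nodePos_ne_Dinf hT hL hi he e.2
    exact (hV.extr_nodePos hT hL hi v hv).2 (hzv ▸ isJumpAt_of_mem_jumpTrail hL hD hz)
  inner_disjoint e e' he he' z hz hz' := by
    have hend : ∀ e : List Bool × Bool, e.1.length < h →
        z ∈ jumpTrail X (entry X (nodePos X i e.1) e.2) →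
        jumpEnd X z = nodePos X i (e.1 ++ [e.2]) := by
      intro e he hz
      rw [nodePos_concat,
        jumpEnd_of_mem_jumpTrail hL (hV.extr_entry_nodePos_ne_Dinf hT hL hi he e.2) hz]
    have hlen := List.length_append_singleton_le (x := e.2) he
    have hlen' := List.length_append_singleton_le (x := e'.2) he'
    have := hV.injOn hlen hlen' ((hV.extr_nodePos hT hL hi _ hlen).1.symm.trans
      ((hend e he hz).symm.trans (hend e' he' hz') ▸ (hV.extr_nodePos hT hL hi _ hlen').1))
    exact Prod.ext (List.append_singleton_inj.1 this).1 (List.append_singleton_inj.1 this).2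

theorem not_extr {k : ℕ} (hV : IsThreadTree h V) (hh : 6 * k + 15 ≤ h) (hb : JumpBounded k X)
    (hT : ExtrEqns X T) (hL : LoopRule X T) {i : ℤ} (hi : T i = V []) : False :=
  (TreeLayout.isEmpty_of_le (by omega)).false (hV.layout hb hT hL hi)

end IsThreadTree

end ThreadTree

section APower

variable {A : Type} (a : A) {P : BTAinf A}

theorem eq_pccInf_of_val_aPowD {m : ℕ} (hP : P.1 (m + 1) = aPowD a (m + 1)) :
    P = pccInf a (P.child false) (P.child true) ∧ ∀ x, (P.child x).1 m = aPowD a m := by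
  refine ⟨eq_pccInf_child ?_, fun x => ?_⟩
  · rw [← P.pi_val_of_le (Nat.le_add_left 1 m), hP]; rfl
  · show BTA.child x (P.1 (m + 1)) = _
    rw [hP]; cases x <;> rfl

theorem desc_val_aPowD {n : ℕ} (hP : P.1 n = aPowD a n) (u : List Bool) (hu : u.length ≤ n) :
    (P.desc u).1 (n - u.length) = aPowD a (n - u.length) := by
  induction u using List.reverseRecOn with
  | nil => exact hP
  | append_singleton u x ih =>
    simp only [List.length_append, List.length_singleton] at hu ⊢
    have ih := ih (by omega)
    rw [show n - u.length = n - (u.length + 1) + 1 by omega] at ih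
    rw [BTAinf.desc_concat]
    exact (eq_pccInf_of_val_aPowD a ih).2 x

theorem desc_eq_pccInf {n : ℕ} (hP : P.1 n = aPowD a n) {u : List Bool} (hu : u.length < n) :
    P.desc u = pccInf a (P.desc (u ++ [false])) (P.desc (u ++ [true])) := by
  have hval := desc_val_aPowD a hP u hu.le
  rw [show n - u.length = n - u.length - 1 + 1 by omega] at hval
  rw [BTAinf.desc_concat, BTAinf.desc_concat]
  exact (eq_pccInf_of_val_aPowD a hval).1

theorem NRes.of_pccInf {m : ℕ} {b : A} {v₀ v₁ Q : BTAinf A} (h : NRes (m + 1) (pccInf b v₀ v₁) Q) :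
    NRes m v₀ Q ∨ NRes m v₁ Q := by
  generalize hv : pccInf b v₀ v₁ = v at h
  cases h with
  | left _ _ _ _ _ hres =>
    have h₀ := congrArg (BTAinf.child false) hv
    simp only [child_pccInf, cond_false] at h₀
    exact .inl (h₀ ▸ hres)
  | right _ _ _ _ _ hres =>
    have h₁ := congrArg (BTAinf.child true) hv
    simp only [child_pccInf, cond_true] at h₁
    exact .inr (h₁ ▸ hres)

theorem NRes.eq_desc {n : ℕ} (hP : P.1 n = aPowD a n) {m : ℕ} :
    ∀ {u : List Bool} {Q : BTAinf A}, u.length + m ≤ n → NRes m (P.desc u) Q →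
      ∃ s : List Bool, s.length = m ∧ Q = P.desc (u ++ s) := by
  induction m with
  | zero =>
    rintro u Q - ⟨⟩
    exact ⟨[], rfl, by simp⟩
  | succ m ih =>
    intro u Q hu hres
    rw [desc_eq_pccInf a hP (by omega)] at hres
    obtain ⟨x, hx⟩ : ∃ x : Bool, NRes m (P.desc (u ++ [x])) Q := by
      rcases hres.of_pccInf with h | h
      exacts [⟨false, h⟩, ⟨true, h⟩]
    obtain ⟨s, hs, rfl⟩ := ih (by grind) hx
    exact ⟨x :: s, by simp [hs], by simp⟩

theorem exists_extr_eq_desc {X : List (Instr A)} {T : ℤ → BTAinf A} (hT : ExtrEqns X T)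
    (hL : LoopRule X T) {i : ℤ} (hi : T i = P) {n : ℕ} (hP : P.1 n = aPowD a n) (w : List Bool)
    (hw : w.length ≤ n) : ∃ j, T j = P.desc w := by
  induction w using List.reverseRecOn with
  | nil => exact ⟨i, hi⟩
  | append_singleton w x ih =>
    have hw' : w.length < n := by grind
    obtain ⟨j, hj⟩ := ih hw'.le
    obtain ⟨j', hj'⟩ := exists_extr_eq_child hT hL (hj.trans (desc_eq_pccInf a hP hw')) x
    exact ⟨j', by cases x <;> exact hj'⟩

theorem isThreadTree_desc {h : ℕ} (hP : P.1 h = aPowD a h)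
    (hleaf : ∀ s : List Bool, s.length = h →
      P.desc s ≠ Dinf A ∧ (P.desc s).1 1 ≠ BTA.pcc BTA.D a BTA.D)
    (hinj : Set.InjOn P.desc {s | s.length = h}) : IsThreadTree h P.desc := by
  have hinner : ∀ u : List Bool, u.length < h → (P.desc u).1 1 = BTA.pcc BTA.D a BTA.D :=
    fun u hu => desc_eq_pccInf a hP hu ▸ pccInf_val_one _ _ _
  have hpad : ∀ u v s : List Bool, P.desc u = P.desc v → P.desc (u ++ s) = P.desc (v ++ s) := by
    intro u v s huv
    rw [BTAinf.desc_append, BTAinf.desc_append, huv]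
  have hlt : ∀ u v : List Bool, u.length < v.length → v.length ≤ h → P.desc u ≠ P.desc v := by
    intro u v huv hv heq
    refine (hleaf (v ++ List.replicate (h - v.length) false) (by grind)).2 ?_
    rw [← hpad u v _ heq]
    exact hinner _ (by grind)
  refine ⟨fun u hu => ⟨a, desc_eq_pccInf a hP hu⟩, fun u hu => ?_, fun u hu v hv huv => ?_⟩
  · rcases hu.lt_or_eq with hu | hu
    · exact desc_eq_pccInf a hP hu ▸ pccInf_ne_Dinf _ _ _
    · exact (hleaf u hu).1
  · replace hu : u.length ≤ h := hu
    replace hv : v.length ≤ h := hv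
    rcases lt_trichotomy u.length v.length with huv' | huv' | huv'
    · exact absurd huv (hlt u v huv' hv)
    · have := hinj (show (u ++ List.replicate (h - u.length) false).length = h by grind)
        (show (v ++ List.replicate (h - u.length) false).length = h by grind)
        (hpad u v _ huv)
      exact List.append_cancel_right this
    · exact absurd huv.symm (hlt v u huv' hu)

theorem HasAN.exists_leaves {n : ℕ} (hP : HasAN a n P) :
    ∃ L : Finset (List Bool), L.card = 2 ^ n - 1 ∧ Set.InjOn P.desc L ∧
      ∀ s ∈ L, s.length = n ∧ (P.desc s).1 1 ≠ BTA.pcc BTA.D a BTA.D := by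
  classical
  obtain ⟨hval, R, hRinj, hR⟩ := hP
  choose leaf hleaf_len hleaf using fun m =>
    NRes.eq_desc a hval (u := []) (m := n) (Q := R m) (by simp) (by simpa using (hR m).1)
  simp only [List.nil_append] at hleaf
  have hleaf_inj : Function.Injective leaf := fun m m' hmm' =>
    hRinj (by rw [hleaf, hleaf, hmm'])
  refine ⟨Finset.univ.image leaf, ?_, ?_, ?_⟩
  · rw [Finset.card_image_of_injective _ hleaf_inj, Finset.card_univ, Fintype.card_fin]
  · rintro _ hs _ hs' hss'
    obtain ⟨m, -, rfl⟩ := Finset.mem_image.1 hs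
    obtain ⟨m', -, rfl⟩ := Finset.mem_image.1 hs'
    rw [hRinj ((hleaf m).trans (hss'.trans (hleaf m').symm))]
  · rintro _ hs
    obtain ⟨m, -, rfl⟩ := Finset.mem_image.1 hs
    exact ⟨hleaf_len m, hleaf m ▸ (hR m).2⟩

/-- Of the `2ⁿ` leaves at most one carries no residual and at most one carries `D`; some subtree
of depth `n - 2` avoids both. -/
theorem HasAN.exists_good_subtree {h : ℕ} (hP : HasAN a (h + 2) P) :
    ∃ w : List Bool, w.length = 2 ∧
      (∀ s : List Bool, s.length = h →
        P.desc (w ++ s) ≠ Dinf A ∧ (P.desc (w ++ s)).1 1 ≠ BTA.pcc BTA.D a BTA.D) ∧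
      Set.InjOn (fun s => P.desc (w ++ s)) {s | s.length = h} := by
  classical
  obtain ⟨L, hcard, hinj, hL⟩ := hP.exists_leaves
  set leaves := (Finset.univ : Finset (List.Vector Bool (h + 2))).image List.Vector.toList
  set dead := L.filter (P.desc · = Dinf A)
  have hmissed : (leaves \ L).card ≤ 1 := by
    rw [Finset.card_sdiff_of_subset fun s hs => List.Vector.mem_image_toList.2 (hL s hs).1,
      List.Vector.card_image_toList, Fintype.card_bool, hcard]
    omega
  have hdead : dead.card ≤ 1 := Finset.card_le_one.2 fun s hs s' hs' =>
    hinj (Finset.mem_filter.1 hs).1 (Finset.mem_filter.1 hs').1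
      ((Finset.mem_filter.1 hs).2.trans (Finset.mem_filter.1 hs').2.symm)
  obtain ⟨w, hw, hwB⟩ := exists_length_two_not_prefix ((leaves \ L) ∪ dead)
    ((Finset.card_union_le _ _).trans_lt (by omega))
  have hgood : ∀ s : List Bool, s.length = h → w ++ s ∈ L ∧ P.desc (w ++ s) ≠ Dinf A := by
    intro s hs
    have hnot : w ++ s ∉ (leaves \ L) ∪ dead := fun hB => hwB _ hB (List.prefix_append w s)
    have hleaf : w ++ s ∈ leaves := List.Vector.mem_image_toList.2 (by grind)
    simp only [Finset.mem_union, Finset.mem_sdiff, hleaf, true_and, not_or, not_not, dead,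
      Finset.mem_filter] at hnot
    exact ⟨hnot.1, fun hD => hnot.2 ⟨hnot.1, hD⟩⟩
  refine ⟨w, hw, fun s hs => ⟨(hgood s hs).2, (hL _ (hgood s hs).1).2⟩,
    fun s hs s' hs' hss' => ?_⟩
  exact List.append_cancel_left (hinj (hgood s hs).1 (hgood s' hs').1 hss')

theorem HasAN.exists_isThreadTree {h : ℕ} (hP : HasAN a (h + 2) P) :
    ∃ w : List Bool, w.length = 2 ∧ IsThreadTree h (P.desc w).desc := by
  obtain ⟨w, hw, hleaf, hinj⟩ := hP.exists_good_subtree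
  refine ⟨w, hw, isThreadTree_desc a ?_ ?_ ?_⟩
  · simpa [hw] using desc_val_aPowD a hP.1 w (by omega)
  · simpa only [← BTAinf.desc_append] using hleaf
  · intro s hs s' hs' hss'
    exact hinj hs hs' (by simpa only [BTAinf.desc_append] using hss')

theorem not_hasANExpr {k : ℕ} {X : List (Instr A)} (hb : JumpBounded k X) :
    ¬ HasANExpr a (6 * k + 17) X := by
  rintro ⟨T, i, hT, hL, hP⟩
  obtain ⟨w, hw, hV⟩ := hP.exists_isThreadTree
  obtain ⟨j, hj⟩ := exists_extr_eq_desc a hT hL rfl hP.1 w (by omega)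
  exact hV.not_extr le_rfl hb hT hL hj

end APower

section Witness

variable {A : Type} (a : A)

def binVal (u : List Bool) : ℕ := u.foldl (fun t x => 2 * t + cond x 1 0) 0

theorem binVal_concat (u : List Bool) (x : Bool) :
    binVal (u ++ [x]) = 2 * binVal u + cond x 1 0 :=
  List.foldl_concat _ _ _ _

theorem binVal_inj_of_length_eq {u v : List Bool} (hlen : u.length = v.length)
    (huv : binVal u = binVal v) : u = v := by
  induction u using List.reverseRecOn generalizing v with
  | nil => exact (List.length_eq_zero_iff.1 hlen.symm).symm
  | append_singleton u x ih =>
    induction v using List.reverseRecOn with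
    | nil => simp at hlen
    | append_singleton v y =>
      rw [binVal_concat, binVal_concat] at huv
      obtain ⟨rfl, hval⟩ : x = y ∧ binVal u = binVal v := by cases x <;> cases y <;> grind
      rw [ih (by simpa using hlen) hval]

def sChain : ℕ → BTA A
  | 0 => BTA.S
  | j + 1 => BTA.pcc (sChain j) a (sChain j)

theorem depth_sChain (j : ℕ) : (sChain a j).depth = j := by
  induction j with
  | zero => rfl
  | succ j ih => simp [sChain, BTA.depth, ih]

/-- The subtree of depth `d` with index `t` among the subtrees of that depth: its leaves carry
chains of increasing lengths, multiples of `g`, so that its depth `d + (t + 1) 2ᵈ g` determines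
`d` (as long as `d < g`) and `t`. -/
def qtree (g : ℕ) : ℕ → ℕ → BTA A
  | 0, t => sChain a ((t + 1) * g)
  | d + 1, t => BTA.pcc (qtree g d (2 * t)) a (qtree g d (2 * t + 1))

theorem depth_qtree (g d t : ℕ) : (qtree a g d t).depth = d + (t + 1) * 2 ^ d * g := by
  induction d generalizing t with
  | zero => simp [qtree, depth_sChain]
  | succ d ih =>
    simp only [qtree, BTA.depth, ih]
    rw [max_eq_right (by gcongr; omega), pow_succ]
    ring

theorem isThreadTree_qtree (h : ℕ) :
    IsThreadTree h fun u => embed (qtree a (h + 1) (h - u.length) (binVal u)) := by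
  refine ⟨fun u hu => ⟨a, ?_⟩, fun u hu hD => ?_, fun u hu v hv huv => ?_⟩
  · simp only [List.length_append, List.length_singleton, binVal_concat]
    rw [show h - u.length = h - (u.length + 1) + 1 by omega, qtree, embed_pcc]
    rfl
  · have hdepth : (qtree a (h + 1) (h - u.length) (binVal u)).depth = 0 :=
      congrArg BTA.depth (embed_injective (hD.trans embed_D.symm))
    have : 0 < (binVal u + 1) * 2 ^ (h - u.length) * (h + 1) := by positivity
    rw [depth_qtree] at hdepth
    omega
  · replace hu : u.length ≤ h := hu
    replace hv : v.length ≤ h := hv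
    have hdepth := congrArg BTA.depth (embed_injective huv)
    simp only [depth_qtree] at hdepth
    have hmod := congrArg (· % (h + 1)) hdepth
    simp only [Nat.add_mul_mod_self_right, Nat.mod_eq_of_lt (show h - u.length < h + 1 by omega),
      Nat.mod_eq_of_lt (show h - v.length < h + 1 by omega)] at hmod
    have hlen : u.length = v.length := by omega
    rw [hlen, Nat.add_left_cancel_iff] at hdepth
    have hbin := Nat.eq_of_mul_eq_mul_right (Nat.two_pow_pos _)
      (Nat.eq_of_mul_eq_mul_right (Nat.succ_pos h) hdepth)
    exact binVal_inj_of_length_eq hlen (by omega)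

end Witness

/-- For every bound `k` there is `n ∈ ℕ⁺` such that no expression of `C_k`
has the `a-n`-property; consequently, some finite BTA thread is not the
thread extraction, from any position, of any expression in `C_k`. -/
theorem ck_not_universal {A : Type} (a : A) (k : ℕ) :
    ∃ n : ℕ, 0 < n ∧
      (∀ X : List (Instr A), X ≠ [] → JumpBounded k X → ¬ HasANExpr a n X) ∧
      ∃ Q : BTA A, ∀ X : List (Instr A), X ≠ [] → JumpBounded k X →
        ∀ (T : ℤ → BTAinf A) (i : ℤ),
          ExtrEqns X T → LoopRule X T → T i ≠ embed Q := by
  refine ⟨6 * k + 17, by omega, fun X _ hb => not_hasANExpr a hb,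
    qtree a (6 * k + 16) (6 * k + 15) 0, fun X _ hb T i hT hL hi => ?_⟩
  exact (isThreadTree_qtree a (6 * k + 15)).not_extr le_rfl hb hT hL hi
end
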